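/- arXiv:1908.05124 — 2 statements merged into one kernel-verified Lean document; each statement's English description precedes it below -/
import Mathlib

section
/- Let S be a finite set of points in ℝ² in general position and let a, b ∈ S be distinct points such that the segment ab is an edge of the convex hull of S (i.e., all points of S \ {a,b} lie strictly on one side of the line through a and b). If there exist points x, y ∈ S such that a, b, x, y are the vertices, in convex position, of a quadrilateral whose interior contains no point of S and whose boundary contains the edge ab (a convex 4-hole on edge ab), then ab is not an exit edge of S. -/
open Finset

/-- Points of the plane. -/
abbrev Pt := ℝ × ℝ

/-- Twice the signed area of the triangle `p q r` (orientation determinant). -/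
def det3 (p q r : Pt) : ℝ := (q.1 - p.1) * (r.2 - p.2) - (q.2 - p.2) * (r.1 - p.1)

/-- A finite point set is in general position if no three distinct points are collinear. -/
def GenPos (S : Finset Pt) : Prop :=
  ∀ p ∈ S, ∀ q ∈ S, ∀ r ∈ S, p ≠ q → p ≠ r → q ≠ r → det3 p q r ≠ 0

/-- The line through `u` and `v` strictly separates the points `x` and `y`. -/
def StrictSep (u v x y : Pt) : Prop := det3 u v x * det3 u v y < 0

/-- `ab` is an exit edge of `S` with witness `c`: no point `p ∈ S \ {a,b,c}` is such that
the line through `a` and `p` strictly separates `b` from `c`, or the line through `b`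
and `p` strictly separates `a` from `c`. -/
def IsExitWitness (S : Finset Pt) (a b c : Pt) : Prop :=
  a ∈ S ∧ b ∈ S ∧ c ∈ S ∧ a ≠ b ∧ a ≠ c ∧ b ≠ c ∧
    ∀ p ∈ S, p ≠ a → p ≠ b → p ≠ c → ¬ StrictSep a p b c ∧ ¬ StrictSep b p a c

/-- `ab` is an exit edge of `S` if it has some witness. -/
def IsExitEdge (S : Finset Pt) (a b : Pt) : Prop := ∃ c, IsExitWitness S a b c

/-- `ab` is an edge of the convex hull of `S`: all other points of `S` lie strictly on
one side of the line through `a` and `b`. -/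
def IsHullEdge (S : Finset Pt) (a b : Pt) : Prop :=
  (∀ p ∈ S, p ≠ a → p ≠ b → 0 < det3 a b p) ∨ (∀ p ∈ S, p ≠ a → p ≠ b → det3 a b p < 0)

/-- The four points `p q r s`, in this cyclic order, are the vertices of a convex
quadrilateral traced counterclockwise. -/
def ConvexCCW4 (p q r s : Pt) : Prop :=
  0 < det3 p q r ∧ 0 < det3 q r s ∧ 0 < det3 r s p ∧ 0 < det3 s p q

/-- `a, b, x, y` span a convex quadrilateral with `ab` as one of its edges. -/
def ConvexQuadOnEdge (a b x y : Pt) : Prop :=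
  ConvexCCW4 a b x y ∨ ConvexCCW4 a b y x ∨ ConvexCCW4 b a x y ∨ ConvexCCW4 b a y x

/-- The open interior of the quadrilateral spanned by `a, b, x, y` (in convex position)
contains no point of `S`. -/
def QuadInteriorEmpty (S : Finset Pt) (a b x y : Pt) : Prop :=
  ∀ p ∈ S, p ∉ interior (convexHull ℝ ({a, b, x, y} : Set Pt))

/-!
Orient the hole counterclockwise as `a b x y`, with every other point of `S` to the left of
`ab`, and let `c` be a witness. If `c = y`, the line `ax` separates `b` from `c`; if `c = x`,
the line `by` separates `a` from `c`. Otherwise neither line `ax` nor line `bx` may separate,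
which in general position puts `c` strictly inside the triangle `abx`, hence inside the hole.
-/

lemma det3_cyclic (p q r : Pt) : det3 q r p = det3 p q r := by unfold det3; ring

lemma det3_swap_left (p q r : Pt) : det3 q p r = -det3 p q r := by unfold det3; ring

lemma det3_swap_right (p q r : Pt) : det3 p r q = -det3 p q r := by unfold det3; ring

lemma ne_of_det3_ne_zero {p q r : Pt} (h : det3 p q r ≠ 0) : p ≠ q ∧ q ≠ r ∧ r ≠ p := by
  refine ⟨?_, ?_, ?_⟩ <;> rintro rfl <;> apply h <;> unfold det3 <;> ring

lemma det3_add_det3_add_det3 (p q r z : Pt) :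
    det3 q r z + det3 r p z + det3 p q z = det3 p q r := by
  unfold det3; ring

/-- Barycentric coordinates via Cramer's rule. -/
lemma det3_smul_eq_add (p q r z : Pt) :
    det3 p q r • z = det3 q r z • p + det3 r p z • q + det3 p q z • r := by
  ext <;> simp only [Prod.smul_fst, Prod.smul_snd, Prod.fst_add, Prod.snd_add, smul_eq_mul] <;>
    unfold det3 <;> ring

lemma mem_convexHull_triangle {p q r z : Pt} (hpqr : 0 < det3 p q r)
    (hpq : 0 ≤ det3 p q z) (hqr : 0 ≤ det3 q r z) (hrp : 0 ≤ det3 r p z) :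
    z ∈ convexHull ℝ ({p, q, r} : Set Pt) := by
  have hz : z = ∑ i, (![det3 q r z, det3 r p z, det3 p q z] i / det3 p q r) • ![p, q, r] i := by
    simp only [Fin.sum_univ_three, Matrix.cons_val_zero, Matrix.cons_val_one, Matrix.cons_val_two,
      Matrix.head_cons, Matrix.tail_cons, div_eq_inv_mul, mul_smul, ← smul_add]
    rw [← det3_smul_eq_add, inv_smul_smul₀ hpqr.ne']
  rw [hz]
  refine (convex_convexHull ℝ _).sum_mem (fun i _ => ?_) ?_ (fun i _ => ?_)
  · fin_cases i <;> exact div_nonneg ‹_› hpqr.le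
  · simp only [Fin.sum_univ_three, Matrix.cons_val_zero, Matrix.cons_val_one, Matrix.cons_val_two,
      Matrix.head_cons, Matrix.tail_cons, ← add_div, det3_add_det3_add_det3, div_self hpqr.ne']
  · fin_cases i <;> exact subset_convexHull ℝ _ (by simp)

lemma mem_interior_convexHull_triangle {p q r z : Pt}
    (hpq : 0 < det3 p q z) (hqr : 0 < det3 q r z) (hrp : 0 < det3 r p z) :
    z ∈ interior (convexHull ℝ ({p, q, r} : Set Pt)) := by
  have hcont : ∀ u v : Pt, Continuous (det3 u v) := fun u v => by unfold det3; fun_prop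
  have hopen : IsOpen {w : Pt | 0 < det3 p q w ∧ 0 < det3 q r w ∧ 0 < det3 r p w} :=
    (isOpen_lt continuous_const (hcont p q)).and
      ((isOpen_lt continuous_const (hcont q r)).and (isOpen_lt continuous_const (hcont r p)))
  refine interior_maximal ?_ hopen ⟨hpq, hqr, hrp⟩
  rintro w ⟨h₁, h₂, h₃⟩
  have hpqr : 0 < det3 p q r := by
    rw [← det3_add_det3_add_det3 p q r w]
    positivity
  exact mem_convexHull_triangle hpqr h₁.le h₂.le h₃.le

lemma strictSep_of_neg_of_pos {u v x y : Pt} (hx : det3 u v x < 0) (hy : 0 < det3 u v y) :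
    StrictSep u v x y :=
  mul_neg_of_neg_of_pos hx hy

lemma strictSep_of_pos_of_neg {u v x y : Pt} (hx : 0 < det3 u v x) (hy : det3 u v y < 0) :
    StrictSep u v x y :=
  mul_neg_of_pos_of_neg hx hy

lemma IsExitWitness.symm {S : Finset Pt} {a b c : Pt} (h : IsExitWitness S a b c) :
    IsExitWitness S b a c := by
  obtain ⟨ha, hb, hc, hab, hac, hbc, hsep⟩ := h
  exact ⟨hb, ha, hc, hab.symm, hbc, hac, fun p hp hpb hpa hpc => (hsep p hp hpa hpb hpc).symm⟩

lemma IsHullEdge.symm {S : Finset Pt} {a b : Pt} (h : IsHullEdge S a b) : IsHullEdge S b a := by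
  rcases h with h | h
  · exact Or.inr fun p hp hpb hpa => by rw [det3_swap_left]; linarith [h p hp hpa hpb]
  · exact Or.inl fun p hp hpb hpa => by rw [det3_swap_left]; linarith [h p hp hpa hpb]

lemma IsHullEdge.det3_pos {S : Finset Pt} {a b x : Pt} (h : IsHullEdge S a b) (hx : x ∈ S)
    (hxa : x ≠ a) (hxb : x ≠ b) (habx : 0 < det3 a b x) :
    ∀ p ∈ S, p ≠ a → p ≠ b → 0 < det3 a b p :=
  h.resolve_right fun hneg => (hneg x hx hxa hxb).not_gt habx

theorem not_isExitWitness_of_convexCCW4 {S : Finset Pt} {a b x y c : Pt} (hgp : GenPos S)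
    (hx : x ∈ S) (hy : y ∈ S) (hquad : ConvexCCW4 a b x y) (hhull : IsHullEdge S a b)
    (hempty : ∀ p ∈ S, p ∉ interior (convexHull ℝ ({a, b, x} : Set Pt))) :
    ¬ IsExitWitness S a b c := by
  rintro ⟨ha, hb, hc, -, hac, hbc, hsep⟩
  obtain ⟨habx, hbxy, hxya, hyab⟩ := hquad
  obtain ⟨-, hbx, hxa⟩ := ne_of_det3_ne_zero habx.ne'
  obtain ⟨-, hxy, -⟩ := ne_of_det3_ne_zero hbxy.ne'
  obtain ⟨hya, -, hby⟩ := ne_of_det3_ne_zero hyab.ne'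
  have haxb : det3 a x b < 0 := by rw [det3_swap_right]; linarith
  have hbxa : 0 < det3 b x a := by rwa [det3_cyclic]
  by_cases hcy : c = y
  · subst hcy
    refine (hsep x hx hxa hbx.symm hxy).1 (strictSep_of_neg_of_pos haxb ?_)
    rwa [← det3_cyclic]
  by_cases hcx : c = x
  · subst hcx
    refine (hsep y hy hya hby.symm (Ne.symm hxy)).2 (strictSep_of_pos_of_neg ?_ ?_)
    · rwa [det3_cyclic, det3_cyclic]
    · rw [det3_swap_right]; linarith
  obtain ⟨hsep_ax, hsep_bx⟩ := hsep x hx hxa hbx.symm (Ne.symm hcx)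
  have haxc : det3 a x c < 0 :=
    (not_lt.1 fun h => hsep_ax (strictSep_of_neg_of_pos haxb h)).lt_of_ne
      (hgp a ha x hx c hc hxa.symm hac (Ne.symm hcx))
  have hbxc : 0 < det3 b x c :=
    (not_lt.1 fun h => hsep_bx (strictSep_of_pos_of_neg hbxa h)).lt_of_ne'
      (hgp b hb x hx c hc hbx hbc (Ne.symm hcx))
  have habc : 0 < det3 a b c := hhull.det3_pos hx hxa hbx.symm habx c hc hac.symm hbc.symm
  refine hempty c hc (mem_interior_convexHull_triangle habc hbxc ?_)
  rw [det3_swap_left]; linarith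

theorem hull_edge_on_convex_four_hole_not_exit_edge_general (S : Finset Pt) (a b : Pt)
    (hgp : GenPos S)
    (hhull : IsHullEdge S a b)
    (hhole : ∃ x ∈ S, ∃ y ∈ S, x ≠ a ∧ x ≠ b ∧ y ≠ a ∧ y ≠ b ∧ x ≠ y ∧
      ConvexQuadOnEdge a b x y ∧ QuadInteriorEmpty S a b x y) :
    ¬ IsExitEdge S a b := by
  rintro ⟨c, hw⟩
  obtain ⟨x, hx, y, hy, -, -, -, -, -, hquad, hempty⟩ := hhole
  have hface : ∀ T ⊆ ({a, b, x, y} : Set Pt), ∀ p ∈ S, p ∉ interior (convexHull ℝ T) :=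
    fun T hT p hp hpT => hempty p hp (interior_mono (convexHull_mono hT) hpT)
  rcases hquad with h | h | h | h
  · exact not_isExitWitness_of_convexCCW4 hgp hx hy h hhull (hface _ (by grind)) hw
  · exact not_isExitWitness_of_convexCCW4 hgp hy hx h hhull (hface _ (by grind)) hw
  · exact not_isExitWitness_of_convexCCW4 hgp hx hy h hhull.symm (hface _ (by grind)) hw.symm
  · exact not_isExitWitness_of_convexCCW4 hgp hy hx h hhull.symm (hface _ (by grind)) hw.symm

/-- If `ab` is a hull edge of `S` lying on a convex 4-hole of `S`, then `ab` is not an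
exit edge of `S`. -/
theorem hull_edge_on_convex_four_hole_not_exit_edge (S : Finset Pt) (a b : Pt)
    (hgp : GenPos S) (ha : a ∈ S) (hb : b ∈ S) (hab : a ≠ b)
    (hhull : IsHullEdge S a b)
    (hhole : ∃ x ∈ S, ∃ y ∈ S, x ≠ a ∧ x ≠ b ∧ y ≠ a ∧ y ≠ b ∧ x ≠ y ∧
      ConvexQuadOnEdge a b x y ∧ QuadInteriorEmpty S a b x y) :
    ¬ IsExitEdge S a b :=
  hull_edge_on_convex_four_hole_not_exit_edge_general S a b hgp hhull hhole
end

section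
/- Let S be a finite set of points in ℝ² in general position and a, b, c ∈ S distinct. If ab is an exit edge with witness c, then the open triangle with vertices a, b, c contains no point of S (i.e., abc is a 3-hole in S). -/
open Finset

lemma det3_affine (u v x y : Pt) (θ σ : ℝ) (h : θ + σ = 1) :
    det3 u v (θ • x + σ • y) = θ * det3 u v x + σ * det3 u v y := by
  have hθ : θ = 1 - σ := by linarith
  subst hθ
  simp only [det3, Prod.smul_fst, Prod.smul_snd, Prod.fst_add, Prod.snd_add, smul_eq_mul]
  ring

lemma mem_interior_halfplane (u v w p : Pt) (huv : u ≠ v) (hD : det3 u v w ≠ 0)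
    (hp : p ∈ interior (convexHull ℝ ({u, v, w} : Set Pt))) :
    0 < det3 u v p * det3 u v w := by
  set D := det3 u v w with hDdef
  set f : Pt → ℝ := fun x => det3 u v x * D with hf
  have hconv : Convex ℝ {x : Pt | 0 ≤ f x} := by
    intro x hx y hy θ σ hθ hσ hθσ
    simp only [Set.mem_setOf_eq, hf] at *
    rw [det3_affine u v x y θ σ hθσ, add_mul]
    have h1 := mul_nonneg hθ hx
    have h2 := mul_nonneg hσ hy
    nlinarith
  have hsub : convexHull ℝ ({u, v, w} : Set Pt) ⊆ {x : Pt | 0 ≤ f x} := by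
    apply convexHull_min _ hconv
    intro x hx
    simp only [Set.mem_insert_iff, Set.mem_singleton_iff] at hx
    rcases hx with h | h | h <;> rw [h] <;> simp only [Set.mem_setOf_eq, hf]
    · have : det3 u v u = 0 := by unfold det3; ring
      rw [this]; simp
    · have : det3 u v v = 0 := by unfold det3; ring
      rw [this]; simp
    · exact mul_self_nonneg _
  have hpH : p ∈ interior {x : Pt | 0 ≤ f x} := interior_mono hsub hp
  rw [mem_interior_iff_mem_nhds, Metric.mem_nhds_iff] at hpH
  obtain ⟨ε, hε, hball⟩ := hpH
  by_contra hneg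
  push_neg at hneg
  set c1 : ℝ := -(v.2 - u.2) * D with hc1
  set c2 : ℝ := (v.1 - u.1) * D with hc2
  have hgrad : ∀ x : Pt, f x = f p + c1 * (x.1 - p.1) + c2 * (x.2 - p.2) := by
    intro x
    simp only [hf, hc1, hc2, det3]
    ring
  have hne : c1 ≠ 0 ∨ c2 ≠ 0 := by
    by_contra h
    push_neg at h
    obtain ⟨h1, h2⟩ := h
    apply huv
    have e1 : v.2 - u.2 = 0 := by
      rcases mul_eq_zero.mp (by linarith [h1] : -(v.2 - u.2) * D = 0) with h | h
      · linarith
      · exact absurd h hD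
    have e2 : v.1 - u.1 = 0 := by
      rcases mul_eq_zero.mp h2 with h | h
      · exact h
      · exact absurd h hD
    have : u.1 = v.1 := by linarith
    have : u.2 = v.2 := by linarith
    exact Prod.ext (by linarith) (by linarith)
  have hpos : 0 < c1 ^ 2 + c2 ^ 2 := by
    rcases hne with h | h
    · have : 0 < c1 ^ 2 := lt_of_le_of_ne (sq_nonneg _) (Ne.symm (pow_ne_zero 2 h))
      nlinarith [sq_nonneg c2]
    · have : 0 < c2 ^ 2 := lt_of_le_of_ne (sq_nonneg _) (Ne.symm (pow_ne_zero 2 h))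
      nlinarith [sq_nonneg c1]
  set t : ℝ := ε / (2 * (|c1| + |c2| + 1)) with ht
  have hden : 0 < |c1| + |c2| + 1 := by positivity
  have htpos : 0 < t := by positivity
  set q : Pt := (p.1 - t * c1, p.2 - t * c2) with hq
  have hqball : q ∈ Metric.ball p ε := by
    rw [Metric.mem_ball, Prod.dist_eq]
    have h1 : dist q.1 p.1 = t * |c1| := by
      simp only [hq, Real.dist_eq]
      rw [show p.1 - t * c1 - p.1 = -(t * c1) by ring, abs_neg, abs_mul,
        abs_of_pos htpos]
    have h2 : dist q.2 p.2 = t * |c2| := by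
      simp only [hq, Real.dist_eq]
      rw [show p.2 - t * c2 - p.2 = -(t * c2) by ring, abs_neg, abs_mul,
        abs_of_pos htpos]
    rw [h1, h2]
    have hb1 : t * |c1| < ε := by
      rw [ht]
      rw [div_mul_eq_mul_div, div_lt_iff₀ (by positivity)]
      nlinarith [abs_nonneg c1, abs_nonneg c2]
    have hb2 : t * |c2| < ε := by
      rw [ht]
      rw [div_mul_eq_mul_div, div_lt_iff₀ (by positivity)]
      nlinarith [abs_nonneg c1, abs_nonneg c2]
    exact max_lt hb1 hb2
  have hqH : 0 ≤ f q := hball hqball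
  have hfq : f q = f p - t * (c1 ^ 2 + c2 ^ 2) := by
    rw [hgrad q]
    simp only [hq]
    ring
  have hfp : f p = det3 u v p * D := rfl
  have hfp' : f p ≤ 0 := by rw [hfp]; exact hneg
  linarith [mul_pos htpos hpos]

theorem exit_edge_witness_triangle_empty' (S : Finset Pt) (a b c : Pt)
    (hD : det3 a b c ≠ 0)
    (hab : a ≠ b) (hac : a ≠ c) (hbc : b ≠ c)
    (hmain : ∀ p ∈ S, p ≠ a → p ≠ b → p ≠ c →
      ¬ (det3 a p b * det3 a p c < 0) ∧ ¬ (det3 b p a * det3 b p c < 0)) :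
    ∀ p ∈ S, p ∉ interior (convexHull ℝ ({a, b, c} : Set Pt)) := by
  intro p hpS hp
  have h1 : 0 < det3 a b p * det3 a b c := mem_interior_halfplane a b c p hab hD hp
  have hset : ({a, b, c} : Set Pt) = ({c, a, b} : Set Pt) := by
    ext x; simp only [Set.mem_insert_iff, Set.mem_singleton_iff]; tauto
  have hDc : det3 c a b ≠ 0 := by
    have : det3 c a b = det3 a b c := by unfold det3; ring
    rw [this]; exact hD
  have h2 : 0 < det3 c a p * det3 c a b :=
    mem_interior_halfplane c a b p (Ne.symm hac) hDc (hset ▸ hp)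
  have hpa : p ≠ a := by
    intro h
    rw [h] at h1
    have : det3 a b a = 0 := by unfold det3; ring
    rw [this] at h1; simp at h1
  have hpb : p ≠ b := by
    intro h
    rw [h] at h1
    have : det3 a b b = 0 := by unfold det3; ring
    rw [this] at h1; simp at h1
  have hpc : p ≠ c := by
    intro h
    rw [h] at h2
    have : det3 c a c = 0 := by unfold det3; ring
    rw [this] at h2; simp at h2
  obtain ⟨hno, _⟩ := hmain p hpS hpa hpb hpc
  apply hno
  have e1 : det3 a p b = -det3 a b p := by unfold det3; ring
  have e2 : det3 a p c = det3 c a p := by unfold det3; ring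
  have e3 : det3 c a b = det3 a b c := by unfold det3; ring
  rw [e1, e2]
  rw [e3] at h2
  have hD2 : 0 < det3 a b c ^ 2 := lt_of_le_of_ne (sq_nonneg _) (Ne.symm (pow_ne_zero 2 hD))
  have key : det3 a b p * det3 c a p =
      ((det3 a b p * det3 a b c) * (det3 c a p * det3 a b c)) / det3 a b c ^ 2 := by
    field_simp
  have : 0 < det3 a b p * det3 c a p := by
    rw [key]
    exact div_pos (mul_pos h1 h2) hD2
  linarith [this]

/-- If `ab` is an exit edge of `S` with witness `c`, then the open triangle `a b c`
contains no point of `S`. -/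
theorem exit_edge_witness_triangle_empty (S : Finset Pt) (a b c : Pt)
    (hgp : GenPos S) (hw : IsExitWitness S a b c) :
    ∀ p ∈ S, p ∉ interior (convexHull ℝ ({a, b, c} : Set Pt)) := by
  obtain ⟨ha, hb, hc, hab, hac, hbc, hmain⟩ := hw
  exact exit_edge_witness_triangle_empty' S a b c (hgp a ha b hb c hc hab hac hbc)
    hab hac hbc hmain
end
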